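/- arXiv:2405.07787 — 2 statements merged into one kernel-verified Lean document; each statement's English description precedes it below -/
import Mathlib

section
/- If x ≺ y for nonnegative vectors x, y of length n with nonincreasing components, then y can be derived from x by applying at most n−1 A-transforms. -/
open Finset Matrix

/-- Prefix sum of the first `k` components. -/
def psum {n : ℕ} (x : Fin n → ℝ) (k : ℕ) : ℝ :=
  ∑ i ∈ Finset.filter (fun i : Fin n => (i : ℕ) < k) Finset.univ, x i

/-- `x` is majorized by `y` (both assumed sorted nonincreasingly). -/
def Maj {n : ℕ} (x y : Fin n → ℝ) : Prop :=
  (∀ k, k < n → psum x k ≤ psum y k) ∧ (∑ i, x i) = ∑ i, y i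

/-- An A-transform: for `i < j` and `λ ∈ [0,1]`, replace `x i` by `x i + λ * x j`
and `x j` by `(1 - λ) * x j`. -/
def ATrans {n : ℕ} (x x' : Fin n → ℝ) : Prop :=
  ∃ (i j : Fin n) (lam : ℝ), i < j ∧ 0 ≤ lam ∧ lam ≤ 1 ∧
    x' = Function.update (Function.update x i (x i + lam * x j)) j ((1 - lam) * x j)

/-- A B-transform: for `i < j` and `λ ∈ [0,1]`, replace `y i` by `(1 - λ) * y i`
and `y j` by `y j + λ * y i`. -/
def BTrans {n : ℕ} (y y' : Fin n → ℝ) : Prop :=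
  ∃ (i j : Fin n) (lam : ℝ), i < j ∧ 0 ≤ lam ∧ lam ≤ 1 ∧
    y' = Function.update (Function.update y i ((1 - lam) * y i)) j (y j + lam * y i)

/-- Lower triangular row-stochastic matrix. -/
def LowerRS {n : ℕ} (L : Matrix (Fin n) (Fin n) ℝ) : Prop :=
  (∀ i j, 0 ≤ L i j) ∧ (∀ i j : Fin n, i < j → L i j = 0) ∧ (∀ i, ∑ j, L i j = 1)

/-- Upper triangular row-stochastic matrix. -/
def UpperRS {n : ℕ} (U : Matrix (Fin n) (Fin n) ℝ) : Prop :=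
  (∀ i j, 0 ≤ U i j) ∧ (∀ i j : Fin n, j < i → U i j = 0) ∧ (∀ i, ∑ j, U i j = 1)

lemma psum_sub {n : ℕ} (x y : Fin n → ℝ) (k : ℕ) :
    psum y k - psum x k
      = ∑ i ∈ Finset.filter (fun i : Fin n => (i : ℕ) < k) Finset.univ, (y i - x i) := by
  simp [psum, Finset.sum_sub_distrib]

lemma psum_n {n : ℕ} (x : Fin n → ℝ) : psum x n = ∑ i, x i := by
  unfold psum
  congr 1
  apply Finset.filter_true_of_mem
  intro i _; exact i.isLt

lemma psum_succ {n : ℕ} (x : Fin n → ℝ) (k : ℕ) (hk : k < n) :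
    psum x (k + 1) = psum x k + x ⟨k, hk⟩ := by
  unfold psum
  have h : Finset.filter (fun i : Fin n => (i : ℕ) < k + 1) Finset.univ
      = insert ⟨k, hk⟩ (Finset.filter (fun i : Fin n => (i : ℕ) < k) Finset.univ) := by
    ext i
    simp only [Finset.mem_filter, Finset.mem_univ, true_and, Finset.mem_insert, Fin.ext_iff]
    omega
  rw [h, Finset.sum_insert (by simp)]
  ring

/-- One step of the construction: if `x ≠ y`, one A-transform gets strictly closer. -/
lemma step_lemma {n : ℕ} (x y : Fin n → ℝ) (hy0 : ∀ i, 0 ≤ y i) (hmaj : Maj x y)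
    (hne : x ≠ y) :
    ∃ x', ATrans x x' ∧ Maj x' y ∧
      (Finset.filter (fun l => x' l ≠ y l) Finset.univ).card + 1
        ≤ (Finset.filter (fun l => x l ≠ y l) Finset.univ).card ∧
      2 ≤ (Finset.filter (fun l => x l ≠ y l) Finset.univ).card := by
  classical
  have hSne : (Finset.filter (fun l => x l ≠ y l) (Finset.univ : Finset (Fin n))).Nonempty := by
    rw [Finset.filter_nonempty_iff]
    by_contra h
    push_neg at h
    exact hne (funext fun l => h l (Finset.mem_univ l))
  obtain ⟨i, hi_ne, hmin⟩ :
      ∃ i : Fin n, x i ≠ y i ∧ ∀ l : Fin n, l < i → x l = y l := by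
    refine ⟨Finset.min' _ hSne, ?_, ?_⟩
    · have h := Finset.min'_mem _ hSne
      rw [Finset.mem_filter] at h; exact h.2
    · intro l hl
      by_contra h
      exact absurd (Finset.min'_le _ l (Finset.mem_filter.mpr ⟨Finset.mem_univ l, h⟩))
        (not_le.mpr hl)
  have hple : ∀ k, k ≤ n → psum x k ≤ psum y k := by
    intro k hk
    rcases lt_or_eq_of_le hk with h | h
    · exact hmaj.1 k h
    · subst h; rw [psum_n, psum_n, hmaj.2]
  have heqi : psum x (i : ℕ) = psum y (i : ℕ) := by
    unfold psum
    apply Finset.sum_congr rfl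
    intro l hl
    rw [Finset.mem_filter] at hl
    exact hmin l (Fin.lt_def.mpr hl.2)
  have hxi : x i < y i := by
    have h1 : psum x ((i : ℕ) + 1) ≤ psum y ((i : ℕ) + 1) := hple _ i.isLt
    rw [psum_succ x _ i.isLt, psum_succ y _ i.isLt] at h1
    simp only [Fin.eta] at h1
    exact lt_of_le_of_ne (by linarith [heqi]) hi_ne
  have hex : ∃ j : Fin n, y j < x j := by
    by_contra h
    push_neg at h
    have : ∑ l, x l < ∑ l, y l :=
      Finset.sum_lt_sum (fun l _ => h l) ⟨i, Finset.mem_univ i, hxi⟩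
    exact absurd hmaj.2 (ne_of_lt this)
  have hTne : (Finset.filter (fun l : Fin n => y l < x l) (Finset.univ : Finset (Fin n))).Nonempty :=
    ⟨hex.choose, Finset.mem_filter.mpr ⟨Finset.mem_univ _, hex.choose_spec⟩⟩
  obtain ⟨j, hjT, hminj⟩ :
      ∃ j : Fin n, y j < x j ∧ ∀ l : Fin n, l < j → x l ≤ y l := by
    refine ⟨Finset.min' _ hTne, ?_, ?_⟩
    · have h := Finset.min'_mem _ hTne
      rw [Finset.mem_filter] at h; exact h.2
    · intro l hl
      by_contra h
      push_neg at h
      exact absurd (Finset.min'_le _ l (Finset.mem_filter.mpr ⟨Finset.mem_univ l, h⟩))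
        (not_le.mpr hl)
  have hij : i < j := by
    rcases lt_trichotomy i j with h | h | h
    · exact h
    · rw [h] at hxi; linarith
    · have := hmin j h; linarith
  have hij' : i ≠ j := ne_of_lt hij
  set d := min (y i - x i) (x j - y j) with hd
  have hd0 : 0 < d := lt_min (by linarith) (by linarith)
  have hdxj : d ≤ x j := le_trans (min_le_right _ _) (by linarith [hy0 j])
  have hxj0 : 0 < x j := lt_of_le_of_lt (hy0 j) hjT
  set lam := d / x j with hlam
  have hlam0 : 0 ≤ lam := div_nonneg hd0.le hxj0.le
  have hlam1 : lam ≤ 1 := (div_le_one hxj0).mpr hdxj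
  have hlamd : lam * x j = d := div_mul_cancel₀ d hxj0.ne'
  set x' := Function.update (Function.update x i (x i + lam * x j)) j ((1 - lam) * x j)
    with hx'
  have hpt : ∀ l, x' l = x l + (if l = i then d else 0) - (if l = j then d else 0) := by
    intro l
    rcases eq_or_ne l j with rfl | hlj
    · rw [hx', Function.update_self, sub_mul, one_mul, hlamd]
      simp [Ne.symm hij']
    · rw [hx', Function.update_of_ne hlj]
      rcases eq_or_ne l i with rfl | hli
      · rw [Function.update_self, hlamd]
        simp [hlj]
      · rw [Function.update_of_ne hli]
        simp [hli, hlj]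
  have hpsum : ∀ k, psum x' k
      = psum x k + (if (i : ℕ) < k then d else 0) - (if (j : ℕ) < k then d else 0) := by
    intro k
    unfold psum
    rw [Finset.sum_congr rfl (fun l _ => hpt l)]
    rw [Finset.sum_sub_distrib, Finset.sum_add_distrib]
    congr 2
    · rw [Finset.sum_ite_eq' _ i (fun _ => d)]
      simp
    · rw [Finset.sum_ite_eq' _ j (fun _ => d)]
      simp
  have hmaj' : Maj x' y := by
    constructor
    · intro k hk
      rw [hpsum k]
      by_cases hjk : (j : ℕ) < k
      · have hik : (i : ℕ) < k := lt_trans (Fin.lt_def.mp hij) hjk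
        rw [if_pos hik, if_pos hjk]
        have := hmaj.1 k hk
        linarith
      · by_cases hik : (i : ℕ) < k
        · rw [if_pos hik, if_neg hjk]
          have hkj : k ≤ (j : ℕ) := not_lt.mp hjk
          have hkey : y i - x i ≤ psum y k - psum x k := by
            rw [psum_sub]
            apply Finset.single_le_sum (f := fun l => y l - x l)
            · intro l hl
              rw [Finset.mem_filter] at hl
              have : (l : ℕ) < (j : ℕ) := lt_of_lt_of_le hl.2 hkj
              have := hminj l (Fin.lt_def.mpr this)
              linarith
            · rw [Finset.mem_filter]; exact ⟨Finset.mem_univ i, hik⟩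
          have hdle : d ≤ psum y k - psum x k := le_trans (min_le_left _ _) hkey
          linarith
        · rw [if_neg hik, if_neg hjk]
          have := hmaj.1 k hk
          linarith
    · have h1 : ∑ l, x' l = psum x' n := (psum_n x').symm
      rw [h1, hpsum n, if_pos i.isLt, if_pos j.isLt, psum_n]
      rw [hmaj.2]; ring
  have hiS : i ∈ Finset.filter (fun l => x l ≠ y l) (Finset.univ : Finset (Fin n)) :=
    Finset.mem_filter.mpr ⟨Finset.mem_univ i, hi_ne⟩
  have hjS : j ∈ Finset.filter (fun l => x l ≠ y l) (Finset.univ : Finset (Fin n)) :=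
    Finset.mem_filter.mpr ⟨Finset.mem_univ j, ne_of_gt hjT⟩
  obtain ⟨r, hrS, hrfix⟩ :
      ∃ r, r ∈ Finset.filter (fun l => x l ≠ y l) (Finset.univ : Finset (Fin n)) ∧
        x' r = y r := by
    rcases le_total (y i - x i) (x j - y j) with h | h
    · refine ⟨i, hiS, ?_⟩
      rw [hpt i, if_pos rfl, if_neg hij', hd, min_eq_left h]; ring
    · refine ⟨j, hjS, ?_⟩
      rw [hpt j, if_neg (Ne.symm hij'), if_pos rfl, hd, min_eq_right h]; ring
  have hsub : Finset.filter (fun l => x' l ≠ y l) Finset.univ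
      ⊆ (Finset.filter (fun l => x l ≠ y l) (Finset.univ : Finset (Fin n))).erase r := by
    intro l hl
    rw [Finset.mem_filter] at hl
    rw [Finset.mem_erase]
    constructor
    · rintro rfl; exact hl.2 hrfix
    · rw [Finset.mem_filter]
      refine ⟨Finset.mem_univ l, ?_⟩
      rcases eq_or_ne l i with rfl | hli
      · exact ne_of_lt hxi
      rcases eq_or_ne l j with rfl | hlj
      · exact ne_of_gt hjT
      · have := hpt l
        rw [if_neg hli, if_neg hlj] at this
        simp only [add_zero, sub_zero] at this
        rw [this] at hl
        exact hl.2
  refine ⟨x', ⟨i, j, lam, hij, hlam0, hlam1, hx'⟩, hmaj', ?_, ?_⟩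
  · have h1 := Finset.card_le_card hsub
    rw [Finset.card_erase_of_mem hrS] at h1
    have h2 := Finset.card_pos.mpr ⟨r, hrS⟩
    omega
  · have h1 : ({i, j} : Finset (Fin n))
        ⊆ Finset.filter (fun l => x l ≠ y l) (Finset.univ : Finset (Fin n)) := by
      intro l hl
      rcases Finset.mem_insert.mp hl with rfl | hl
      · exact hiS
      · rw [Finset.mem_singleton] at hl; subst hl; exact hjS
    have h2 := Finset.card_le_card h1
    rwa [Finset.card_pair hij'] at h2

lemma main_lemma {n : ℕ} : ∀ (c : ℕ) (x y : Fin n → ℝ), (∀ i, 0 ≤ y i) → Maj x y →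
    (Finset.filter (fun l => x l ≠ y l) Finset.univ).card ≤ c →
    ∃ (m : ℕ) (f : ℕ → Fin n → ℝ), m ≤ c - 1 ∧ f 0 = x ∧ f m = y ∧
      ∀ t < m, ATrans (f t) (f (t + 1)) := by
  intro c
  induction c with
  | zero =>
    intro x y hy0 hmaj hcard
    have hxy : x = y := by
      funext l
      by_contra h
      have : l ∈ Finset.filter (fun l => x l ≠ y l) Finset.univ := by
        rw [Finset.mem_filter]; exact ⟨Finset.mem_univ l, h⟩
      have := Finset.card_pos.mpr ⟨l, this⟩
      omega
    exact ⟨0, fun _ => x, by omega, rfl, hxy, by omega⟩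
  | succ c ih =>
    intro x y hy0 hmaj hcard
    by_cases hxy : x = y
    · exact ⟨0, fun _ => x, by omega, rfl, hxy, by omega⟩
    · obtain ⟨x', hA, hmaj', hlt, h2⟩ := step_lemma x y hy0 hmaj hxy
      obtain ⟨m', f', hm', hf0, hfm, hfstep⟩ := ih x' y hy0 hmaj' (by omega)
      refine ⟨m' + 1, fun t => match t with | 0 => x | Nat.succ t => f' t, by omega, rfl,
        hfm, ?_⟩
      intro t ht
      match t with
      | 0 => simpa [hf0] using hA
      | Nat.succ t => exact hfstep t (by omega)

theorem stmt2 {n : ℕ} (x y : Fin n → ℝ)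
    (hx0 : ∀ i, 0 ≤ x i) (hy0 : ∀ i, 0 ≤ y i)
    (hxs : Antitone x) (hys : Antitone y)
    (hmaj : Maj x y) :
    ∃ (m : ℕ) (f : ℕ → Fin n → ℝ), m ≤ n - 1 ∧ f 0 = x ∧ f m = y ∧
      ∀ t < m, ATrans (f t) (f (t + 1)) := by
  apply main_lemma n x y hy0 hmaj
  calc (Finset.filter (fun l => x l ≠ y l) Finset.univ).card
      ≤ (Finset.univ : Finset (Fin n)).card := Finset.card_le_card (Finset.filter_subset _ _)
    _ = n := by simp
end

section
/- Let x, y be probability vectors on n outcomes with nonincreasing positive components, x ≺ y, x ≠ y, and let U be the upper triangular row-stochastic matrix obtained via the canonical B-transform sequence with x = yU. Then H(x) ≥ (1 − α(U)) H(y) + Σ_i x_i log₂(1/(uU)_i) − (1 − α(U)) log₂ n > α(U) log₂ n + (1 − α(U)) H(y), where u = (1/n,...,1/n), H is Shannon entropy, and α(U) is the Dobrushin coefficient of U. -/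
open Finset Matrix

/-- The matrix of a B-transform with indices `i < j` and coefficient `lam`. -/
def BMat {n : ℕ} (i j : Fin n) (lam : ℝ) : Matrix (Fin n) (Fin n) ℝ :=
  fun a b =>
    if a = i then (if b = i then 1 - lam else if b = j then lam else 0)
    else (if a = b then 1 else 0)

/-- A canonical B-transform chain from `y` down to `x`:
`z 0 = y`, `z s = x`, and at each step `t < s` the index `jj t` is the largest
index where `z t` exceeds `x`, `kk t` is the smallest index above `jj t` where
`x` exceeds `z t`, and `lam t = min (z t (jj t) - x (jj t)) (x (kk t) - z t (kk t)) / z t (jj t)`,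
with `z (t+1) = (z t) ⬝ᵥ BMat (jj t) (kk t) (lam t)` (row-vector times matrix). -/
structure CanonChain {n : ℕ} (x y : Fin n → ℝ) (s : ℕ)
    (z : ℕ → Fin n → ℝ) (jj kk : ℕ → Fin n) (lam : ℕ → ℝ) : Prop where
  z_zero : z 0 = y
  z_last : z s = x
  lt : ∀ t < s, jj t < kk t
  j_big : ∀ t < s, x (jj t) < z t (jj t)
  j_largest : ∀ t < s, ∀ i : Fin n, jj t < i → z t i ≤ x i
  k_small : ∀ t < s, z t (kk t) < x (kk t)
  k_smallest : ∀ t < s, ∀ i : Fin n, jj t < i → i < kk t → x i ≤ z t i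
  lam_def : ∀ t < s,
    lam t = min (z t (jj t) - x (jj t)) (x (kk t) - z t (kk t)) / z t (jj t)
  step : ∀ t < s, z (t + 1) = Matrix.vecMul (z t) (BMat (jj t) (kk t) (lam t))

/-- Dobrushin coefficient of ergodicity. -/
noncomputable def dobrushin {n : ℕ} (C : Matrix (Fin n) (Fin n) ℝ) : ℝ :=
  ⨅ p : Fin n × Fin n, ∑ i, min (C p.1 i) (C p.2 i)

/-- Shannon entropy (base 2). -/
noncomputable def shannonH {n : ℕ} (p : Fin n → ℝ) : ℝ :=
  -∑ i, p i * Real.logb 2 (p i)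

/-!
Relative entropy is an integral of hockey-stick divergences `E_γ(p‖q) = ∑ᵢ (pᵢ - γ qᵢ)⁺`:
`D(p‖q) = ∫₁^∞ (E_γ(p‖q) / γ + E_γ(q‖p) / γ²) dγ` (for positive vectors the integrands vanish
beyond `max (pᵢ/qᵢ) (qᵢ/pᵢ)`, so the integral may be truncated). For `γ ≥ 1` each `E_γ`
contracts by the factor `1 - α(W)` under a stochastic matrix `W`: the positive part of
`(p - γ q) W` lives on a set `A`, and two rows of `W` put masses on `A` differing by at most
`1 - α(W)`. Hence `D(yU‖uU) ≤ (1 - α(U)) D(y‖u)`, which is the first inequality written in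
entropies.

The second inequality says `∑ᵢ xᵢ log cᵢ < 0` for the column sums `c` of `U`. Products of
B-transform matrices are upper triangular and row stochastic, so for nonincreasing `x` we get
`∑ᵢ xᵢ cᵢ ≤ ∑ᵢ xᵢ = 1`, and `log t ≤ t - 1` is strict at some `cᵢ ≠ 1`: otherwise `U` would be a
doubly stochastic triangular matrix, i.e. the identity, and `x = yU = y`.
-/

open Filter MeasureTheory intervalIntegral

section RelativeEntropy

variable {ι : Type*} [Fintype ι]

def hockeyStick (γ : ℝ) (p q : ι → ℝ) : ℝ := ∑ i, max (p i - γ * q i) 0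

noncomputable def relEntropy (p q : ι → ℝ) : ℝ := ∑ i, p i * Real.log (p i / q i)

lemma continuous_hockeyStick (p q : ι → ℝ) : Continuous fun γ => hockeyStick γ p q := by
  unfold hockeyStick; fun_prop

lemma intervalIntegrable_div_pow {f : ℝ → ℝ} (hf : Continuous f) (k : ℕ) {a b : ℝ}
    (ha : 0 < a) (hb : 0 < b) : IntervalIntegrable (fun γ => f γ / γ ^ k) volume a b := by
  refine ContinuousOn.intervalIntegrable (hf.continuousOn.div (by fun_prop) fun γ hγ => ?_)
  have : 0 < γ := by rcases Set.mem_uIcc.1 hγ with h | h <;> linarith [h.1]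
  positivity

lemma integral_max_sub_mul_div_pow {a b M : ℝ} (hb : 0 < b) (h1 : 1 ≤ a / b) (hM : a / b ≤ M)
    (k : ℕ) : ∫ γ in 1..M, max (a - γ * b) 0 / γ ^ k = ∫ γ in 1..a / b, (a - γ * b) / γ ^ k := by
  have hcont : Continuous fun γ => max (a - γ * b) 0 := by fun_prop
  rw [← integral_add_adjacent_intervals (b := a / b)
    (intervalIntegrable_div_pow hcont k one_pos (by linarith))
    (intervalIntegrable_div_pow hcont k (by linarith) (by linarith))]
  have hbelow : ∀ γ ∈ Set.uIcc 1 (a / b), max (a - γ * b) 0 / γ ^ k = (a - γ * b) / γ ^ k := by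
    intro γ hγ
    rw [Set.uIcc_of_le h1] at hγ
    rw [max_eq_left (by linarith [(le_div_iff₀ hb).1 hγ.2])]
  have habove : ∀ γ ∈ Set.uIcc (a / b) M, max (a - γ * b) 0 / γ ^ k = 0 := by
    intro γ hγ
    rw [Set.uIcc_of_le hM] at hγ
    rw [max_eq_right (by linarith [(div_le_iff₀ hb).1 hγ.1]), zero_div]
  rw [integral_congr hbelow, integral_congr habove, intervalIntegral.integral_zero, add_zero]

lemma integral_max_div_add_integral_max_div_sq {a b M : ℝ} (ha : 0 < a) (hb : 0 < b)
    (hab : a / b ≤ M) (hba : b / a ≤ M) :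
    (∫ γ in 1..M, max (a - γ * b) 0 / γ) + ∫ γ in 1..M, max (b - γ * a) 0 / γ ^ 2 =
      a * Real.log (a / b) - a + b := by
  have hvanish : ∀ {c d : ℝ}, 0 < c → c ≤ d → 1 ≤ M → ∀ k : ℕ,
      ∫ γ in 1..M, max (c - γ * d) 0 / γ ^ k = 0 := by
    intro c d hc hcd hM k
    refine (integral_congr fun γ hγ => ?_).trans intervalIntegral.integral_zero
    have h1γ : 1 ≤ γ := (Set.uIcc_of_le hM ▸ hγ).1
    simp only [max_eq_right (by nlinarith : c - γ * d ≤ 0), zero_div]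
  have hpos : ∀ {t : ℝ}, 1 ≤ t → ∀ γ ∈ Set.uIcc 1 t, γ ≠ 0 := fun ht γ hγ =>
    (one_pos.trans_le (Set.uIcc_of_le ht ▸ hγ).1).ne'
  rcases le_total b a with hle | hle
  · have h1 : 1 ≤ a / b := (one_le_div hb).2 hle
    have hcut := integral_max_sub_mul_div_pow hb h1 hab 1
    have hint := intervalIntegrable_div_pow (f := fun γ => a - γ * b) (by fun_prop) 1
      one_pos (b := a / b) (by linarith)
    simp only [pow_one] at hcut hint
    rw [hvanish hb hle (h1.trans hab) 2, add_zero, hcut,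
      integral_eq_sub_of_hasDerivAt (f := fun γ => a * Real.log γ - b * γ)
        (fun γ hγ => (((Real.hasDerivAt_log (hpos h1 γ hγ)).const_mul a).sub
          ((hasDerivAt_id γ).const_mul b)).congr_deriv (by field_simp [hpos h1 γ hγ])) hint,
      Real.log_one]
    field_simp
    ring
  · have h1 : 1 ≤ b / a := (one_le_div ha).2 hle
    have hint := intervalIntegrable_div_pow (f := fun γ => b - γ * a) (by fun_prop) 2
      one_pos (b := b / a) (by linarith)
    have hzero := hvanish ha hle (h1.trans hba) 1
    simp only [pow_one] at hzero
    rw [hzero, zero_add, integral_max_sub_mul_div_pow ha h1 hba 2,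
      integral_eq_sub_of_hasDerivAt (f := fun γ => -b * γ⁻¹ - a * Real.log γ)
        (fun γ hγ => (((hasDerivAt_inv (hpos h1 γ hγ)).const_mul (-b)).sub
          ((Real.hasDerivAt_log (hpos h1 γ hγ)).const_mul a)).congr_deriv
            (by field_simp [hpos h1 γ hγ])) hint,
      Real.log_div ha.ne' hb.ne', Real.log_div hb.ne' ha.ne', Real.log_one]
    field_simp
    ring

lemma relEntropy_eq_integral_hockeyStick {p q : ι → ℝ} (hp : ∀ i, 0 < p i) (hq : ∀ i, 0 < q i)
    (hpq : ∑ i, p i = ∑ i, q i) {M : ℝ} (hM : ∀ i, p i / q i ≤ M ∧ q i / p i ≤ M) :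
    relEntropy p q =
      (∫ γ in 1..M, hockeyStick γ p q / γ) + ∫ γ in 1..M, hockeyStick γ q p / γ ^ 2 := by
  have hM0 : ∀ i, 0 < M := fun i => (div_pos (hp i) (hq i)).trans_le (hM i).1
  have hint : ∀ (a b : ι → ℝ) (k : ℕ) (i : ι),
      IntervalIntegrable (fun γ => max (a i - γ * b i) 0 / γ ^ k) volume 1 M := fun a b k i =>
    intervalIntegrable_div_pow (by fun_prop) k one_pos (hM0 i)
  simp only [hockeyStick, sum_div]
  rw [integral_finsetSum fun i _ => by simpa using hint p q 1 i,
    integral_finsetSum fun i _ => hint q p 2 i, ← sum_add_distrib,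
    sum_congr rfl fun i _ =>
      integral_max_div_add_integral_max_div_sq (hp i) (hq i) (hM i).1 (hM i).2,
    sum_add_distrib, sum_sub_distrib, hpq, sub_add_cancel, relEntropy]

lemma eventually_relEntropy_eq_integral_hockeyStick {p q : ι → ℝ} (hp : ∀ i, 0 < p i)
    (hq : ∀ i, 0 < q i) (hpq : ∑ i, p i = ∑ i, q i) :
    ∀ᶠ M in atTop, relEntropy p q =
      (∫ γ in 1..M, hockeyStick γ p q / γ) + ∫ γ in 1..M, hockeyStick γ q p / γ ^ 2 :=
  (eventually_all.2 fun _ => (eventually_ge_atTop _).and (eventually_ge_atTop _)).mono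
    fun _ hM => relEntropy_eq_integral_hockeyStick hp hq hpq hM

end RelativeEntropy

section Dobrushin

variable {n : ℕ} {W : Matrix (Fin n) (Fin n) ℝ}

lemma dobrushin_le (W : Matrix (Fin n) (Fin n) ℝ) (a b : Fin n) :
    dobrushin W ≤ ∑ i, min (W a i) (W b i) :=
  ciInf_le (Set.finite_range _).bddBelow (a, b)

lemma sum_sub_sum_le_one_sub_dobrushin (hW1 : ∀ a, ∑ i, W a i = 1) (A : Finset (Fin n))
    (a b : Fin n) : ∑ i ∈ A, W a i - ∑ i ∈ A, W b i ≤ 1 - dobrushin W :=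
  calc ∑ i ∈ A, W a i - ∑ i ∈ A, W b i = ∑ i ∈ A, (W a i - W b i) := (sum_sub_distrib _ _).symm
    _ ≤ ∑ i ∈ A, (W a i - min (W a i) (W b i)) :=
        sum_le_sum fun i _ => sub_le_sub_left (min_le_right _ _) _
    _ ≤ ∑ i, (W a i - min (W a i) (W b i)) :=
        sum_le_univ_sum_of_nonneg fun i => sub_nonneg.2 (min_le_left _ _)
    _ = 1 - ∑ i, min (W a i) (W b i) := by rw [sum_sub_distrib, hW1]
    _ ≤ 1 - dobrushin W := sub_le_sub_left (dobrushin_le W a b) _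

lemma sum_mul_sum_le_one_sub_dobrushin_mul (hW0 : ∀ a i, 0 ≤ W a i) (hW1 : ∀ a, ∑ i, W a i = 1)
    {d : Fin n → ℝ} (hd : ∑ a, d a ≤ 0) (A : Finset (Fin n)) :
    ∑ a, d a * ∑ i ∈ A, W a i ≤ (1 - dobrushin W) * ∑ a, max (d a) 0 := by
  cases isEmpty_or_nonempty (Fin n)
  · simp
  set w : Fin n → ℝ := fun a => ∑ i ∈ A, W a i
  obtain ⟨b, hb⟩ := Finite.exists_min w
  -- subtracting the smallest row mass `w b` costs nothing since `∑ d ≤ 0`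
  calc ∑ a, d a * w a = ∑ a, d a * (w a - w b) + w b * ∑ a, d a := by
        rw [mul_sum, ← sum_add_distrib]; ring_nf
    _ ≤ ∑ a, d a * (w a - w b) :=
        add_le_of_nonpos_right (mul_nonpos_of_nonneg_of_nonpos (sum_nonneg fun i _ => hW0 b i) hd)
    _ ≤ ∑ a, max (d a) 0 * (1 - dobrushin W) := sum_le_sum fun a _ =>
        (mul_le_mul_of_nonneg_right (le_max_left _ _) (sub_nonneg.2 (hb a))).trans
          (mul_le_mul_of_nonneg_left (sum_sub_sum_le_one_sub_dobrushin hW1 A a b)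
            (le_max_right _ _))
    _ = (1 - dobrushin W) * ∑ a, max (d a) 0 := by rw [mul_sum]; simp only [mul_comm]

lemma hockeyStick_vecMul_le (hW0 : ∀ a i, 0 ≤ W a i) (hW1 : ∀ a, ∑ i, W a i = 1)
    {p q : Fin n → ℝ} (hp1 : ∑ i, p i = 1) (hq1 : ∑ i, q i = 1) {γ : ℝ} (hγ : 1 ≤ γ) :
    hockeyStick γ (vecMul p W) (vecMul q W) ≤ (1 - dobrushin W) * hockeyStick γ p q := by
  set d := p - γ • q
  set A := univ.filter fun i => 0 < vecMul d W i
  have hd : ∑ a, d a ≤ 0 := by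
    simp only [d, Pi.sub_apply, Pi.smul_apply, smul_eq_mul, sum_sub_distrib, ← mul_sum, hp1, hq1]
    linarith
  have hposPart : hockeyStick γ (vecMul p W) (vecMul q W) = ∑ i ∈ A, vecMul d W i := by
    rw [sum_filter, hockeyStick]
    refine sum_congr rfl fun i _ => ?_
    rw [show vecMul d W i = vecMul p W i - γ * vecMul q W i by
      simp [d, sub_vecMul, smul_vecMul]]
    split_ifs with h
    · exact max_eq_left h.le
    · exact max_eq_right (not_lt.1 h)
  have hswap : ∑ i ∈ A, vecMul d W i = ∑ a, d a * ∑ i ∈ A, W a i := by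
    simp only [vecMul, dotProduct, mul_sum]
    exact sum_comm
  rw [hposPart, hswap]
  exact sum_mul_sum_le_one_sub_dobrushin_mul hW0 hW1 hd A

lemma relEntropy_vecMul_le (hW0 : ∀ a i, 0 ≤ W a i) (hW1 : ∀ a, ∑ i, W a i = 1)
    {p q : Fin n → ℝ} (hp : ∀ i, 0 < p i) (hq : ∀ i, 0 < q i)
    (hp1 : ∑ i, p i = 1) (hq1 : ∑ i, q i = 1) (hpW : ∀ i, 0 < vecMul p W i)
    (hqW : ∀ i, 0 < vecMul q W i) :
    relEntropy (vecMul p W) (vecMul q W) ≤ (1 - dobrushin W) * relEntropy p q := by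
  have hsum : ∀ r : Fin n → ℝ, ∑ i, r i = 1 → ∑ i, vecMul r W i = 1 := fun r hr => by
    simp only [vecMul, dotProduct]
    rw [sum_comm]
    simp only [← mul_sum, hW1, mul_one, hr]
  obtain ⟨M, hM1, hW, h⟩ := ((eventually_ge_atTop 1).and
    ((eventually_relEntropy_eq_integral_hockeyStick hpW hqW
      ((hsum p hp1).trans (hsum q hq1).symm)).and
    (eventually_relEntropy_eq_integral_hockeyStick hp hq (hp1.trans hq1.symm)))).exists
  have hint : ∀ (a b : Fin n → ℝ) (k : ℕ),
      IntervalIntegrable (fun γ => hockeyStick γ a b / γ ^ k) volume 1 M := fun a b k =>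
    intervalIntegrable_div_pow (continuous_hockeyStick a b) k one_pos (by linarith)
  have hmono : ∀ (a b : Fin n → ℝ) (k : ℕ), ∑ i, a i = 1 → ∑ i, b i = 1 →
      ∫ γ in 1..M, hockeyStick γ (vecMul a W) (vecMul b W) / γ ^ k ≤
        ∫ γ in 1..M, (1 - dobrushin W) * (hockeyStick γ a b / γ ^ k) :=
    fun a b k ha hb => integral_mono_on hM1 (hint _ _ k) ((hint a b k).const_mul _)
      fun γ hγ => by
        rw [← mul_div_assoc]
        exact div_le_div_of_nonneg_right (hockeyStick_vecMul_le hW0 hW1 ha hb hγ.1)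
          (pow_nonneg (by linarith [hγ.1]) k)
  have h1 := hmono p q 1 hp1 hq1
  have h2 := hmono q p 2 hq1 hp1
  simp only [pow_one] at h1
  rw [hW, h, mul_add, ← intervalIntegral.integral_const_mul, ← intervalIntegral.integral_const_mul]
  exact add_le_add h1 h2

end Dobrushin

section UpperTriangular

variable {n : ℕ}

lemma upperRS_one : UpperRS (1 : Matrix (Fin n) (Fin n) ℝ) :=
  ⟨fun i j => by by_cases h : i = j <;> simp [one_apply, h],
    fun i j h => one_apply_ne h.ne', fun i => by simp [one_apply]⟩

lemma UpperRS.mul {A B : Matrix (Fin n) (Fin n) ℝ} (hA : UpperRS A) (hB : UpperRS B) :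
    UpperRS (A * B) := by
  obtain ⟨hA0, hAt, hA1⟩ := hA
  obtain ⟨hB0, hBt, hB1⟩ := hB
  refine ⟨fun i j => ?_, fun i j hji => ?_, fun i => ?_⟩ <;> simp only [mul_apply]
  · exact sum_nonneg fun k _ => mul_nonneg (hA0 i k) (hB0 k j)
  · refine sum_eq_zero fun k _ => ?_
    rcases lt_or_ge k i with hki | hik
    · rw [hAt i k hki, zero_mul]
    · rw [hBt k j (hji.trans_le hik), mul_zero]
  · rw [sum_comm]
    simp only [← mul_sum, hB1, mul_one, hA1]

lemma upperRS_BMat {i j : Fin n} (hij : i < j) {lam : ℝ} (hlam : lam ∈ Set.Icc 0 1) :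
    UpperRS (BMat i j lam) := by
  obtain ⟨h0, h1⟩ := hlam
  refine ⟨fun a b => ?_, fun a b hba => ?_, fun a => ?_⟩
  · unfold BMat; split_ifs <;> linarith
  · unfold BMat; split_ifs <;> first | rfl | omega
  · by_cases ha : a = i
    · simp [BMat, ha, sum_ite, filter_ne', filter_eq', hij.ne']
    · simp [BMat, ha]

lemma UpperRS.eq_one_of_sum_col {U : Matrix (Fin n) (Fin n) ℝ} (hU : UpperRS U)
    (hcol : ∀ j, ∑ i, U i j = 1) : U = 1 := by
  obtain ⟨hU0, hUt, hU1⟩ := hU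
  have hrow : ∀ i, U i i = 1 → ∀ k ≠ i, U i k = 0 := fun i hii k hki => by
    have := sum_le_univ_sum_of_nonneg (s := {i, k}) (hU0 i)
    rw [sum_pair hki.symm, hii, hU1] at this
    linarith [hU0 i k]
  -- by induction on `j`: rows above `j` are rows of the identity, so column `j` is `U j j` alone
  have hdiag : ∀ j, U j j = 1 := fun j => by
    induction j using WellFoundedLT.induction with
    | _ j ih =>
      rw [← hcol j, sum_eq_single j (fun i _ hij => ?_) (by simp)]
      rcases lt_or_gt_of_ne hij with h | h
      · exact hrow i (ih i h) j h.ne'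
      · exact hUt i j h
  ext i k
  by_cases hik : i = k
  · subst hik; simp [hdiag]
  · simp [hik, hrow i (hdiag i) k (Ne.symm hik)]

lemma UpperRS.sum_mul_sum_col_le {U : Matrix (Fin n) (Fin n) ℝ} (hU : UpperRS U)
    {x : Fin n → ℝ} (hx : Antitone x) : ∑ i, x i * ∑ a, U a i ≤ ∑ a, x a := by
  obtain ⟨hU0, hUt, hU1⟩ := hU
  simp only [mul_sum]
  rw [sum_comm]
  refine sum_le_sum fun a _ => ?_
  calc ∑ i, x i * U a i ≤ ∑ i, x a * U a i := sum_le_sum fun i _ => by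
        rcases lt_or_ge i a with h | h
        · simp [hUt a i h]
        · exact mul_le_mul_of_nonneg_right (hx h) (hU0 a i)
    _ = x a := by rw [← mul_sum, hU1, mul_one]

end UpperTriangular

namespace CanonChain

variable {n s : ℕ} {x y : Fin n → ℝ} {z : ℕ → Fin n → ℝ} {jj kk : ℕ → Fin n} {lam : ℕ → ℝ}

lemma lam_mem_Icc (h : CanonChain x y s z jj kk lam) (hx : ∀ i, 0 < x i) {t : ℕ} (ht : t < s) :
    lam t ∈ Set.Icc 0 1 := by
  have hj := h.j_big t ht
  have hk := h.k_small t ht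
  have hz : 0 < z t (jj t) := (hx _).trans hj
  rw [h.lam_def t ht]
  exact ⟨div_nonneg (le_min (by linarith) (by linarith)) hz.le,
    (div_le_one hz).2 ((min_le_left _ _).trans (by linarith [hx (jj t)]))⟩

lemma eq_vecMul_prod (h : CanonChain x y s z jj kk lam) {t : ℕ} (ht : t ≤ s) :
    z t = vecMul y ((List.range t).map fun r => BMat (jj r) (kk r) (lam r)).prod := by
  induction t with
  | zero => simp [h.z_zero]
  | succ t ih =>
    rw [List.prod_range_succ, ← vecMul_vecMul, ← ih (by omega), h.step t (by omega)]

lemma upperRS_prod (h : CanonChain x y s z jj kk lam) (hx : ∀ i, 0 < x i) :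
    UpperRS ((List.range s).map fun t => BMat (jj t) (kk t) (lam t)).prod :=
  List.prod_induction _ (fun _ _ => UpperRS.mul) upperRS_one fun A hA => by
    obtain ⟨t, ht, rfl⟩ := List.mem_map.1 hA
    exact upperRS_BMat (h.lt t (List.mem_range.1 ht)) (h.lam_mem_Icc hx (List.mem_range.1 ht))

end CanonChain

lemma relEntropy_eq_log_two_mul {n : ℕ} {p q : Fin n → ℝ} (hp : ∀ i, 0 < p i)
    (hq : ∀ i, 0 < q i) :
    relEntropy p q = Real.log 2 * (∑ i, p i * Real.logb 2 (1 / q i) - shannonH p) := by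
  simp only [relEntropy, shannonH, sub_neg_eq_add, ← sum_add_distrib, mul_sum]
  refine sum_congr rfl fun i _ => ?_
  rw [Real.log_div (hp i).ne' (hq i).ne', one_div, Real.logb_inv]
  simp only [Real.logb]
  field_simp
  ring

lemma shannonH_vecMul_ge {n : ℕ} {W : Matrix (Fin n) (Fin n) ℝ} (hW0 : ∀ a i, 0 ≤ W a i)
    (hW1 : ∀ a, ∑ i, W a i = 1) {y : Fin n → ℝ} (hy : ∀ i, 0 < y i) (hy1 : ∑ i, y i = 1)
    (hyW : ∀ i, 0 < vecMul y W i) (huW : ∀ i, 0 < vecMul (fun _ => (1 : ℝ) / n) W i) :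
    (1 - dobrushin W) * shannonH y +
        ∑ i, vecMul y W i * Real.logb 2 (1 / vecMul (fun _ => (1 : ℝ) / n) W i) -
        (1 - dobrushin W) * Real.logb 2 n ≤ shannonH (vecMul y W) := by
  have hn : 0 < n := Nat.pos_of_ne_zero (by rintro rfl; simp at hy1)
  have hu : ∀ _ : Fin n, 0 < (1 : ℝ) / n := fun _ => by positivity
  have hu1 : ∑ _ : Fin n, (1 : ℝ) / n = 1 := by simp [hn.ne']
  have hcross : ∑ i, y i * Real.logb 2 (1 / (1 / n)) = Real.logb 2 n := by
    simp [← sum_mul, hy1]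
  have key := relEntropy_vecMul_le hW0 hW1 hy hu hy1 hu1 hyW huW
  rw [relEntropy_eq_log_two_mul hyW huW, relEntropy_eq_log_two_mul hy hu, hcross,
    mul_left_comm] at key
  have := le_of_mul_le_mul_left key (Real.log_pos one_lt_two)
  linarith

lemma sum_mul_log_lt_zero {ι : Type*} [Fintype ι] {x c : ι → ℝ} (hx : ∀ i, 0 < x i)
    (hc : ∀ i, 0 < c i) (hxc : ∑ i, x i * c i ≤ ∑ i, x i) (hne : ∃ i, c i ≠ 1) :
    ∑ i, x i * Real.log (c i) < 0 := by
  obtain ⟨i₀, hi₀⟩ := hne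
  calc ∑ i, x i * Real.log (c i) < ∑ i, x i * (c i - 1) :=
        sum_lt_sum (fun i _ => mul_le_mul_of_nonneg_left (Real.log_le_sub_one_of_pos (hc i))
            (hx i).le)
          ⟨i₀, mem_univ _, mul_lt_mul_of_pos_left (Real.log_lt_sub_one_of_pos (hc i₀) hi₀)
            (hx i₀)⟩
    _ = ∑ i, x i * c i - ∑ i, x i := by simp only [mul_sub, mul_one, sum_sub_distrib]
    _ ≤ 0 := sub_nonpos.2 hxc

lemma logb_lt_sum_mul_logb_inv_div {ι : Type*} [Fintype ι] {x c : ι → ℝ} (hx1 : ∑ i, x i = 1)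
    (hc : ∀ i, 0 < c i) (hlog : ∑ i, x i * Real.log (c i) < 0) {N : ℝ} (hN : 0 < N) :
    Real.logb 2 N < ∑ i, x i * Real.logb 2 (1 / (c i / N)) := by
  have hsplit : ∑ i, x i * Real.logb 2 (1 / (c i / N)) =
      Real.logb 2 N - (∑ i, x i * Real.log (c i)) / Real.log 2 :=
    calc ∑ i, x i * Real.logb 2 (1 / (c i / N))
        = ∑ i, (x i * Real.logb 2 N - x i * Real.log (c i) / Real.log 2) :=
          sum_congr rfl fun i _ => by
            rw [one_div_div, Real.logb_div hN.ne' (hc i).ne', Real.logb.eq_def 2 (c i)]; ring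
      _ = Real.logb 2 N - (∑ i, x i * Real.log (c i)) / Real.log 2 := by
          rw [sum_sub_distrib, ← sum_mul, hx1, one_mul, sum_div]
  rw [hsplit]
  linarith [div_neg_of_neg_of_pos hlog (Real.log_pos one_lt_two)]

lemma vecMul_le_sum_col {ι : Type*} [Fintype ι] {W : Matrix ι ι ℝ} (hW0 : ∀ a i, 0 ≤ W a i)
    {y : ι → ℝ} (hy0 : ∀ a, 0 ≤ y a) (hy1 : ∑ a, y a = 1) (i : ι) :
    vecMul y W i ≤ ∑ a, W a i :=
  sum_le_sum fun a _ => mul_le_of_le_one_left (hW0 a i)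
    (hy1 ▸ single_le_sum (fun b _ => hy0 b) (mem_univ a))

theorem stmt17_general {n : ℕ} (x y : Fin n → ℝ)
    (hx0 : ∀ i, 0 < x i) (hx1 : ∑ i, x i = 1)
    (hy0 : ∀ i, 0 < y i) (hy1 : ∑ i, y i = 1)
    (hxs : Antitone x)
    (hne : x ≠ y)
    (s : ℕ) (z : ℕ → Fin n → ℝ) (jj kk : ℕ → Fin n) (lam : ℕ → ℝ)
    (hchain : CanonChain x y s z jj kk lam)
    (U : Matrix (Fin n) (Fin n) ℝ)
    (hU : U = (((List.range s).map (fun t => BMat (jj t) (kk t) (lam t))).prod)) :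
    ((1 - dobrushin U) * shannonH y +
        (∑ i, x i * Real.logb 2 (1 / Matrix.vecMul (fun _ : Fin n => (1 : ℝ) / n) U i)) -
        (1 - dobrushin U) * Real.logb 2 n ≤ shannonH x) ∧
    (dobrushin U * Real.logb 2 n + (1 - dobrushin U) * shannonH y <
      (1 - dobrushin U) * shannonH y +
        (∑ i, x i * Real.logb 2 (1 / Matrix.vecMul (fun _ : Fin n => (1 : ℝ) / n) U i)) -
        (1 - dobrushin U) * Real.logb 2 n) := by
  have hUrs : UpperRS U := hU ▸ hchain.upperRS_prod hx0
  have hxU : x = vecMul y U := hU ▸ hchain.z_last ▸ hchain.eq_vecMul_prod le_rfl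
  have hn : (0 : ℝ) < n := by
    obtain ⟨i, -⟩ := Function.ne_iff.1 hne
    exact_mod_cast i.pos
  have hcol : ∀ i, 0 < ∑ a, U a i := fun i =>
    (hx0 i).trans_le (hxU ▸ vecMul_le_sum_col hUrs.1 (fun a => (hy0 a).le) hy1 i)
  have huU : vecMul (fun _ => (1 : ℝ) / n) U = fun i => (∑ a, U a i) / n := by
    ext i; simp [vecMul, dotProduct, ← mul_sum, div_eq_inv_mul]
  have hcol_ne : ∃ i, ∑ a, U a i ≠ 1 := by
    by_contra! h
    exact hne (by rw [hxU, hUrs.eq_one_of_sum_col h, vecMul_one])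
  refine ⟨hxU ▸ shannonH_vecMul_ge hUrs.1 hUrs.2.2 hy0 hy1 (hxU ▸ hx0)
    (huU ▸ fun i => div_pos (hcol i) hn), ?_⟩
  have := logb_lt_sum_mul_logb_inv_div hx1 hcol (sum_mul_log_lt_zero hx0 hcol
    (hUrs.sum_mul_sum_col_le hxs) hcol_ne) hn
  simp only [huU]
  linarith

theorem stmt17 {n : ℕ} (hn : 1 < n) (x y : Fin n → ℝ)
    (hx0 : ∀ i, 0 < x i) (hx1 : ∑ i, x i = 1)
    (hy0 : ∀ i, 0 < y i) (hy1 : ∑ i, y i = 1)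
    (hxs : Antitone x) (hys : Antitone y)
    (hmaj : Maj x y) (hne : x ≠ y)
    (s : ℕ) (z : ℕ → Fin n → ℝ) (jj kk : ℕ → Fin n) (lam : ℕ → ℝ)
    (hchain : CanonChain x y s z jj kk lam)
    (U : Matrix (Fin n) (Fin n) ℝ)
    (hU : U = (((List.range s).map (fun t => BMat (jj t) (kk t) (lam t))).prod)) :
    ((1 - dobrushin U) * shannonH y +
        (∑ i, x i * Real.logb 2 (1 / Matrix.vecMul (fun _ : Fin n => (1 : ℝ) / n) U i)) -
        (1 - dobrushin U) * Real.logb 2 n ≤ shannonH x) ∧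
    (dobrushin U * Real.logb 2 n + (1 - dobrushin U) * shannonH y <
      (1 - dobrushin U) * shannonH y +
        (∑ i, x i * Real.logb 2 (1 / Matrix.vecMul (fun _ : Fin n => (1 : ℝ) / n) U i)) -
        (1 - dobrushin U) * Real.logb 2 n) :=
  stmt17_general x y hx0 hx1 hy0 hy1 hxs hne s z jj kk lam hchain U hU
end
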